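/- Let r and q be pmfs on a finite product space Ω = V^I, both satisfying the same block-marginal constraints r_{X_c} = q_{X_c} for all c ∈ C, and suppose q(x) = ∏_{c ∈ C} φ_c(x_c) with all φ_c > 0. Then the cross-entropy of r against q equals the entropy of q: −∑_x r(x) log q(x) = −∑_x q(x) log q(x). -/

import Mathlib

/-!
Since `q = ∏ c, φ c` with positive potentials, `log q = ∑ c, log φ c` is a sum of functions each
depending only on the coordinates in one block `c`. The expectation of a function of `x|_c` is
determined by the marginal on `c`, and `r`, `q` share these marginals, so `𝔼_r[log q] = 𝔼_q[log q]`.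
-/

open Finset

theorem Finset.sum_mul_eq_of_sum_fiber_eq {α β : Type*} [Fintype α] [DecidableEq β]
    (π : α → β) (r q f : α → ℝ) (hf : ∀ x y, π x = π y → f x = f y)
    (hfiber : ∀ x, ∑ y with π y = π x, r y = ∑ y with π y = π x, q y) :
    ∑ x, r x * f x = ∑ x, q x * f x := by
  have sum_by_fibers : ∀ p : α → ℝ,
      ∑ x, p x * f x = ∑ z ∈ univ.image π, ∑ y with π y = z, p y * f y := fun p =>
    (sum_fiberwise_of_maps_to (fun x _ => mem_image_of_mem π (mem_univ x)) _).symm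
  have sum_fiber_mul : ∀ (p : α → ℝ) (x : α),
      ∑ y with π y = π x, p y * f y = (∑ y with π y = π x, p y) * f x := fun p x => by
    rw [sum_mul]
    exact sum_congr rfl fun y hy => by rw [hf y x (mem_filter.1 hy).2]
  rw [sum_by_fibers r, sum_by_fibers q]
  refine sum_congr rfl fun z hz => ?_
  obtain ⟨x, -, rfl⟩ := mem_image.1 hz
  rw [sum_fiber_mul, sum_fiber_mul, hfiber]

theorem Finset.restrict_eq_restrict_iff {ι : Type*} {π : ι → Type*} (s : Finset ι)
    (x y : ∀ i, π i) : s.restrict x = s.restrict y ↔ ∀ i ∈ s, x i = y i := by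
  simp [funext_iff]

section BlockMarginals

variable {I V : Type*} [Fintype I] [DecidableEq I] [Fintype V] [DecidableEq V]

theorem sum_mul_eq_of_marginal_eq (c : Finset I) (r q f : (I → V) → ℝ)
    (hf : ∀ x y, (∀ i ∈ c, x i = y i) → f x = f y)
    (hmarg : ∀ x : I → V,
      ∑ y with ∀ i ∈ c, y i = x i, r y = ∑ y with ∀ i ∈ c, y i = x i, q y) :
    ∑ x, r x * f x = ∑ x, q x * f x := by
  refine sum_mul_eq_of_sum_fiber_eq c.restrict r q f
    (fun x y hxy => hf x y ((restrict_eq_restrict_iff c x y).1 hxy)) fun x => ?_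
  simpa only [restrict_eq_restrict_iff] using hmarg x

theorem sum_mul_eq_of_marginal_eq_of_sum_local (C : Finset (Finset I)) (r q : (I → V) → ℝ)
    (g : Finset I → (I → V) → ℝ) (hg : ∀ c ∈ C, ∀ x y, (∀ i ∈ c, x i = y i) → g c x = g c y)
    (hmarg : ∀ c ∈ C, ∀ x : I → V,
      ∑ y with ∀ i ∈ c, y i = x i, r y = ∑ y with ∀ i ∈ c, y i = x i, q y) :
    ∑ x, r x * ∑ c ∈ C, g c x = ∑ x, q x * ∑ c ∈ C, g c x := by
  simp only [mul_sum]
  rw [sum_comm, sum_comm (f := fun x c => q x * g c x)]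
  exact sum_congr rfl fun c hc =>
    sum_mul_eq_of_marginal_eq c r q (g c) (hg c hc) (hmarg c hc)

end BlockMarginals

theorem stmt_7_general {I V : Type*} [Fintype I] [DecidableEq I] [Fintype V] [DecidableEq V]
    (C : Finset (Finset I))
    (r q : (I → V) → ℝ)
    (φ : Finset I → (I → V) → ℝ)
    (hφpos : ∀ c ∈ C, ∀ x, 0 < φ c x)
    (hφloc : ∀ c ∈ C, ∀ x y : I → V, (∀ i ∈ c, x i = y i) → φ c x = φ c y)
    (hfact : ∀ x, q x = ∏ c ∈ C, φ c x)
    (hmarg : ∀ c ∈ C, ∀ x : I → V,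
      (∑ y ∈ Finset.univ.filter (fun y => ∀ i ∈ c, y i = x i), r y) =
        ∑ y ∈ Finset.univ.filter (fun y => ∀ i ∈ c, y i = x i), q y) :
    (-∑ x, r x * Real.log (q x)) = -∑ x, q x * Real.log (q x) := by
  have log_q : ∀ x, Real.log (q x) = ∑ c ∈ C, Real.log (φ c x) := fun x => by
    rw [hfact, Real.log_prod fun c hc => (hφpos c hc x).ne']
  simp only [log_q]
  rw [sum_mul_eq_of_marginal_eq_of_sum_local C r q (fun c x => Real.log (φ c x))
    (fun c hc x y hxy => congrArg Real.log (hφloc c hc x y hxy)) hmarg]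

/-- If `r` and `q` have the same block marginals and `q` factors over the blocks
with strictly positive potentials, then the cross-entropy of `r` against `q`
equals the entropy of `q`. -/
theorem stmt_7 {I V : Type*} [Fintype I] [DecidableEq I] [Fintype V] [DecidableEq V]
    (C : Finset (Finset I))
    (r q : (I → V) → ℝ)
    (hr0 : ∀ x, 0 ≤ r x) (hr1 : ∑ x, r x = 1)
    (hq0 : ∀ x, 0 ≤ q x) (hq1 : ∑ x, q x = 1)
    (φ : Finset I → (I → V) → ℝ)
    (hφpos : ∀ c ∈ C, ∀ x, 0 < φ c x)
    (hφloc : ∀ c ∈ C, ∀ x y : I → V, (∀ i ∈ c, x i = y i) → φ c x = φ c y)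
    (hfact : ∀ x, q x = ∏ c ∈ C, φ c x)
    (hmarg : ∀ c ∈ C, ∀ x : I → V,
      (∑ y ∈ Finset.univ.filter (fun y => ∀ i ∈ c, y i = x i), r y) =
        ∑ y ∈ Finset.univ.filter (fun y => ∀ i ∈ c, y i = x i), q y) :
    (-∑ x, r x * Real.log (q x)) = -∑ x, q x * Real.log (q x) :=
  stmt_7_general C r q φ hφpos hφloc hfact hmarg
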